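/- Let V be the value function of the Bolza problem with continuous L. Then V is a viscosity subsolution of V_t + H(x,−V_x) = 0 on (0,∞)×ℝⁿ: for every (t,x) with t > 0 and every (p_t,p_x) ∈ ∂₊V(t,x), one has p_t + H(x,−p_x) ≤ 0. The key inequality is that for every u ∈ ℝⁿ, D↓V(t,x)(−1,u) ≥ −L(x,u), where D↓ denotes the upper contingent derivative. -/

import Mathlib

open MeasureTheory Set Filter
open scoped ENNReal

def Superlinear {n : ℕ} (Θ : EuclideanSpace ℝ (Fin n) → ℝ) : Prop :=
  ∀ M : ℝ, ∃ R : ℝ, ∀ u : EuclideanSpace ℝ (Fin n), R ≤ ‖u‖ → M * ‖u‖ ≤ Θ u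

/-- The value function of the Bolza problem: infimum of total cost over
absolutely continuous arcs starting at `x` (represented by their integrable
derivative `y'`). -/
noncomputable def bolzaValue {n : ℕ}
    (L : EuclideanSpace ℝ (Fin n) → EuclideanSpace ℝ (Fin n) → ℝ)
    (φ : EuclideanSpace ℝ (Fin n) → ℝ≥0∞)
    (t : ℝ) (x : EuclideanSpace ℝ (Fin n)) : ℝ≥0∞ :=
  ⨅ (y : ℝ → EuclideanSpace ℝ (Fin n)) (y' : ℝ → EuclideanSpace ℝ (Fin n))
    (_ : IntervalIntegrable y' volume 0 t)
    (_ : ∀ s ∈ Set.Icc (0:ℝ) t, y s = x + ∫ τ in (0:ℝ)..s, y' τ)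
    (_ : IntervalIntegrable (fun s => L (y s) (y' s)) volume 0 t),
    ENNReal.ofReal (∫ s in (0:ℝ)..t, L (y s) (y' s)) + φ (y t)

open scoped RealInnerProductSpace Topology

/-- The Hamiltonian `H(x,p) = sup_u (⟨p,u⟩ - L(x,u))`. -/
noncomputable def hamiltonian {n : ℕ}
    (L : EuclideanSpace ℝ (Fin n) → EuclideanSpace ℝ (Fin n) → ℝ)
    (x p : EuclideanSpace ℝ (Fin n)) : ℝ :=
  sSup {r : ℝ | ∃ u : EuclideanSpace ℝ (Fin n), r = ⟪p, u⟫ - L x u}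

/-- The superdifferential `∂₊W(t,x)` of a function `W : ℝ × ℝⁿ → EReal`. -/
def superdifferentialP {n : ℕ}
    (W : ℝ × EuclideanSpace ℝ (Fin n) → EReal) (p : ℝ × EuclideanSpace ℝ (Fin n)) :
    Set (ℝ × EuclideanSpace ℝ (Fin n)) :=
  {q | Filter.limsup (fun z : ℝ × EuclideanSpace ℝ (Fin n) =>
      ((‖z - p‖⁻¹ : ℝ) : EReal) *
        (W z - W p - ((q.1 * (z.1 - p.1) + ⟪q.2, z.2 - p.2⟫ : ℝ) : EReal)))
    (nhdsWithin p {p}ᶜ) ≤ (0 : EReal)}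

/-- Upper contingent derivative `D↓W(p)(w) = limsup_{h→0+, v→w} (W(p+hv) - W(p))/h`. -/
noncomputable def upperContingentDeriv {α : Type*} [AddCommGroup α] [Module ℝ α]
    [TopologicalSpace α] (W : α → EReal) (p : α) (w : α) : EReal :=
  Filter.limsup (fun q : ℝ × α => ((q.1⁻¹ : ℝ) : EReal) * (W (p + q.1 • q.2) - W p))
    ((𝓝[>] (0:ℝ)) ×ˢ 𝓝 w)


/-!
Concatenating the straight line `s ↦ x + s • u` on `[0, h]` with an arbitrary admissible arc
gives the dynamic programming inequality `V(t,x) ≤ ∫₀ʰ L(x + s u, u) ds + V(t - h, x + h u)`,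
where all values are finite for `t > 0` because `φ` is finite somewhere. Dividing by `h → 0⁺`
yields `D↓V(t,x)(-1,u) ≥ -L(x,u)`; testing a superdifferential `(p_t, p_x)` along the same
direction `(-1, u)` gives `p_t - ⟪p_x, u⟫ - L(x,u) ≤ 0`, and the supremum over `u` is the
subsolution inequality `p_t + H(x, -p_x) ≤ 0`.
-/

theorem le_limsup_of_tendsto_of_eventually_le {α β γ : Type*} [CompleteLinearOrder γ]
    [TopologicalSpace γ] [OrderTopology γ] {l : Filter α} [l.NeBot] {l' : Filter β}
    {f : β → γ} {m : α → β} {g : α → γ} {a : γ} (hg : Tendsto g l (𝓝 a))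
    (hm : Tendsto m l l') (hle : ∀ᶠ h in l, g h ≤ f (m h)) : a ≤ limsup f l' :=
  calc a = limsup g l := hg.limsup_eq.symm
    _ ≤ limsup (f ∘ m) l := limsup_le_limsup hle
    _ = limsup f (map m l) := limsup_comp f m l
    _ ≤ limsup f l' := limsup_le_limsup_of_le hm

theorem tendsto_inv_mul_integral_nhdsGT {g : ℝ → ℝ} (hg : Continuous g) :
    Tendsto (fun h : ℝ => h⁻¹ * ∫ s in (0:ℝ)..h, g s) (𝓝[>] 0) (𝓝 (g 0)) := by
  have hder : HasDerivAt (fun h : ℝ => ∫ s in (0:ℝ)..h, g s) (g 0) 0 :=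
    intervalIntegral.integral_hasDerivAt_right (hg.intervalIntegrable 0 0)
      hg.aestronglyMeasurable.stronglyMeasurableAtFilter hg.continuousAt
  rw [hasDerivAt_iff_tendsto_slope] at hder
  refine (hder.mono_left (nhdsWithin_mono _ fun h (hh : 0 < h) => hh.ne')).congr fun h => ?_
  simp [slope_def_field, div_eq_inv_mul]

theorem le_upperContingentDeriv_of_tendsto {α : Type*} [AddCommGroup α] [Module ℝ α]
    [TopologicalSpace α] {W : α → EReal} {p w : α} {G : ℝ → ℝ} {a : ℝ}
    (hG : Tendsto (fun h => h⁻¹ * G h) (𝓝[>] 0) (𝓝 a))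
    (hle : ∀ᶠ h in 𝓝[>] 0, (G h : EReal) ≤ W (p + h • w) - W p) :
    (a : EReal) ≤ upperContingentDeriv W p w := by
  refine le_limsup_of_tendsto_of_eventually_le (EReal.tendsto_coe.2 hG)
    (tendsto_id.prodMk tendsto_const_nhds) ?_
  filter_upwards [hle, self_mem_nhdsWithin] with h hGh (hh : 0 < h)
  rw [EReal.coe_mul]
  exact mul_le_mul_of_nonneg_left hGh (EReal.coe_nonneg.2 (inv_nonneg.2 hh.le))

theorem le_of_mem_superdifferentialP {n : ℕ} {W : ℝ × EuclideanSpace ℝ (Fin n) → EReal}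
    {p q w : ℝ × EuclideanSpace ℝ (Fin n)} (hq : q ∈ superdifferentialP W p) (hw : w ≠ 0)
    {G : ℝ → ℝ} {a : ℝ} (hG : Tendsto (fun h => h⁻¹ * G h) (𝓝[>] 0) (𝓝 a))
    (hle : ∀ᶠ h in 𝓝[>] 0, (G h : EReal) ≤ W (p + h • w) - W p) :
    a ≤ q.1 * w.1 + ⟪q.2, w.2⟫ := by
  set b := q.1 * w.1 + ⟪q.2, w.2⟫
  have hc : 0 < ‖w‖ := norm_pos_iff.2 hw
  have hm : Tendsto (fun h : ℝ => p + h • w) (𝓝[>] 0) (𝓝[≠] p) := by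
    refine tendsto_nhdsWithin_iff.2 ⟨?_, ?_⟩
    · have : Continuous fun h : ℝ => p + h • w := by fun_prop
      simpa using (this.tendsto 0).mono_left nhdsWithin_le_nhds
    · filter_upwards [self_mem_nhdsWithin] with h (hh : 0 < h)
      simpa using smul_ne_zero hh.ne' hw
  suffices hlim : ((‖w‖⁻¹ * (a - b) : ℝ) : EReal) ≤ 0 from
    sub_nonpos.1 (nonpos_of_mul_nonpos_right (EReal.coe_le_coe_iff.1 hlim) (inv_pos.2 hc))
  refine (le_limsup_of_tendsto_of_eventually_le
    (EReal.tendsto_coe.2 ((hG.sub_const b).const_mul ‖w‖⁻¹)) hm ?_).trans hq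
  filter_upwards [hle, self_mem_nhdsWithin] with h hGh (hh : 0 < h)
  have hlin : q.1 * ((p + h • w).1 - p.1) + ⟪q.2, (p + h • w).2 - p.2⟫ = h * b := by
    simp only [Prod.fst_add, Prod.snd_add, add_sub_cancel_left, Prod.smul_fst, Prod.smul_snd,
      smul_eq_mul, inner_smul_right, b]
    ring
  have hquot : ‖w‖⁻¹ * (h⁻¹ * G h - b) = ‖h • w‖⁻¹ * (G h - h * b) := by
    rw [norm_smul, Real.norm_of_nonneg hh.le]
    field_simp
  rw [hquot, hlin, add_sub_cancel_left, EReal.coe_mul, EReal.coe_sub]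
  exact mul_le_mul_of_nonneg_left (EReal.sub_le_sub hGh le_rfl)
    (EReal.coe_nonneg.2 (inv_nonneg.2 (norm_nonneg _)))

section Concat

variable {E : Type*} [NormedAddCommGroup E]

noncomputable def concatAt {β : Type*} (h : ℝ) (f g : ℝ → β) (s : ℝ) : β :=
  if s ≤ h then f s else g (s - h)

theorem concatAt_comp₂ {β γ δ : Type*} (F : β → γ → δ) (h : ℝ) (f g : ℝ → β) (f' g' : ℝ → γ) :
    (fun s => F (concatAt h f g s) (concatAt h f' g' s)) =
      concatAt h (fun s => F (f s) (f' s)) (fun s => F (g s) (g' s)) := by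
  funext s
  unfold concatAt
  split_ifs <;> rfl

theorem concatAt_of_le {β : Type*} {h s : ℝ} (f g : ℝ → β) (hs : s ≤ h) :
    concatAt h f g s = f s := if_pos hs

theorem concatAt_of_lt {β : Type*} {h s : ℝ} (f g : ℝ → β) (hs : h < s) :
    concatAt h f g s = g (s - h) := if_neg (not_le.2 hs)

theorem intervalIntegrable_concatAt_right {f g : ℝ → E} {h t : ℝ} (hht : h ≤ t)
    (hg : IntervalIntegrable g volume 0 (t - h)) :
    IntervalIntegrable (concatAt h f g) volume h t := by
  have := hg.comp_sub_right h
  rw [zero_add, sub_add_cancel] at this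
  exact this.congr fun s hs =>
    (concatAt_of_lt f g (by rw [uIoc_of_le hht] at hs; exact hs.1)).symm

theorem intervalIntegrable_concatAt {f g : ℝ → E} {h t : ℝ} (h0 : 0 ≤ h) (hht : h ≤ t)
    (hf : IntervalIntegrable f volume 0 h) (hg : IntervalIntegrable g volume 0 (t - h)) :
    IntervalIntegrable (concatAt h f g) volume 0 t :=
  (hf.congr fun s hs => (concatAt_of_le f g
    (by rw [uIoc_of_le h0] at hs; exact hs.2)).symm).trans
    (intervalIntegrable_concatAt_right hht hg)

theorem integral_concatAt [NormedSpace ℝ E] {f g : ℝ → E} {h t : ℝ} (h0 : 0 ≤ h) (hht : h ≤ t)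
    (hf : IntervalIntegrable f volume 0 h) (hg : IntervalIntegrable g volume 0 (t - h)) :
    ∫ s in (0:ℝ)..t, concatAt h f g s = (∫ s in (0:ℝ)..h, f s) + ∫ s in (0:ℝ)..(t - h), g s := by
  have hleft : ∫ s in (0:ℝ)..h, concatAt h f g s = ∫ s in (0:ℝ)..h, f s :=
    intervalIntegral.integral_congr fun s hs =>
      concatAt_of_le f g (by rw [uIcc_of_le h0] at hs; exact hs.2)
  have hright : ∫ s in h..t, concatAt h f g s = ∫ s in (0:ℝ)..(t - h), g s := by
    rw [intervalIntegral.integral_congr_ae (g := fun s => g (s - h)) (ae_of_all _ fun s hs =>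
        concatAt_of_lt f g (by rw [uIoc_of_le hht] at hs; exact hs.1)),
      intervalIntegral.integral_comp_sub_right, sub_self]
  rw [← intervalIntegral.integral_add_adjacent_intervals
    ((intervalIntegrable_concatAt h0 hht hf hg).mono_set (by
      rw [uIcc_of_le h0, uIcc_of_le (h0.trans hht)]; exact Icc_subset_Icc le_rfl hht))
    (intervalIntegrable_concatAt_right hht hg), hleft, hright]

end Concat

section Bolza

variable {n : ℕ} {L : EuclideanSpace ℝ (Fin n) → EuclideanSpace ℝ (Fin n) → ℝ}
  {φ : EuclideanSpace ℝ (Fin n) → ℝ≥0∞}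

/-- The admissibility conditions over which `bolzaValue L φ t x` takes its infimum. -/
def IsBolzaArc (L : EuclideanSpace ℝ (Fin n) → EuclideanSpace ℝ (Fin n) → ℝ) (t : ℝ)
    (x : EuclideanSpace ℝ (Fin n)) (y y' : ℝ → EuclideanSpace ℝ (Fin n)) : Prop :=
  IntervalIntegrable y' volume 0 t ∧ (∀ s ∈ Icc (0:ℝ) t, y s = x + ∫ τ in (0:ℝ)..s, y' τ) ∧
    IntervalIntegrable (fun s => L (y s) (y' s)) volume 0 t

theorem bolzaValue_le_cost {t : ℝ} {x : EuclideanSpace ℝ (Fin n)}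
    {y y' : ℝ → EuclideanSpace ℝ (Fin n)} (hy : IsBolzaArc L t x y y') :
    bolzaValue L φ t x ≤ ENNReal.ofReal (∫ s in (0:ℝ)..t, L (y s) (y' s)) + φ (y t) :=
  iInf_le_of_le y <| iInf_le_of_le y' <| iInf_le_of_le hy.1 <| iInf_le_of_le hy.2.1 <|
    iInf_le _ hy.2.2

theorem IsBolzaArc.apply_zero {t : ℝ} {x : EuclideanSpace ℝ (Fin n)}
    {y y' : ℝ → EuclideanSpace ℝ (Fin n)} (hy : IsBolzaArc L t x y y') (ht : 0 ≤ t) :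
    y 0 = x := by
  rw [hy.2.1 0 ⟨le_rfl, ht⟩, intervalIntegral.integral_same, add_zero]

theorem isBolzaArc_segment (hLcont : Continuous
      (fun p : EuclideanSpace ℝ (Fin n) × EuclideanSpace ℝ (Fin n) => L p.1 p.2))
    (t : ℝ) (x u : EuclideanSpace ℝ (Fin n)) :
    IsBolzaArc L t x (fun s => x + s • u) (fun _ => u) :=
  ⟨intervalIntegrable_const, fun s _ => by simp,
    (hLcont.comp (by fun_prop : Continuous fun s : ℝ => (x + s • u, u))).intervalIntegrable 0 t⟩

theorem IsBolzaArc.concat {h t : ℝ} {x : EuclideanSpace ℝ (Fin n)}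
    {y₁ y₁' y₂ y₂' : ℝ → EuclideanSpace ℝ (Fin n)} (h0 : 0 ≤ h) (hht : h ≤ t)
    (h₁ : IsBolzaArc L h x y₁ y₁') (h₂ : IsBolzaArc L (t - h) (y₁ h) y₂ y₂') :
    IsBolzaArc L t x (concatAt h y₁ y₂) (concatAt h y₁' y₂') := by
  refine ⟨intervalIntegrable_concatAt h0 hht h₁.1 h₂.1, fun s hs => ?_, ?_⟩
  · rcases le_or_gt s h with hsh | hsh
    · have hint : ∫ τ in (0:ℝ)..s, concatAt h y₁' y₂' τ = ∫ τ in (0:ℝ)..s, y₁' τ :=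
        intervalIntegral.integral_congr fun τ hτ => concatAt_of_le y₁' y₂'
          (by rw [uIcc_of_le hs.1] at hτ; exact hτ.2.trans hsh)
      rw [concatAt_of_le y₁ y₂ hsh, h₁.2.1 s ⟨hs.1, hsh⟩, hint]
    · have hsub : IntervalIntegrable y₂' volume 0 (s - h) := h₂.1.mono_set <| by
        rw [uIcc_of_le (by linarith), uIcc_of_le (by linarith)]
        exact Icc_subset_Icc le_rfl (by linarith [hs.2])
      rw [concatAt_of_lt y₁ y₂ hsh, integral_concatAt h0 hsh.le h₁.1 hsub,
        h₂.2.1 (s - h) ⟨by linarith, by linarith [hs.2]⟩, h₁.2.1 h ⟨h0, le_rfl⟩, add_assoc]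
  · rw [concatAt_comp₂ L]
    exact intervalIntegrable_concatAt h0 hht h₁.2.2 h₂.2.2

theorem bolzaValue_le_cost_add_bolzaValue (hL0 : ∀ x u, 0 ≤ L x u) {h t : ℝ}
    (h0 : 0 ≤ h) (hht : h ≤ t) {x : EuclideanSpace ℝ (Fin n)}
    {y₁ y₁' : ℝ → EuclideanSpace ℝ (Fin n)} (h₁ : IsBolzaArc L h x y₁ y₁') :
    bolzaValue L φ t x ≤
      ENNReal.ofReal (∫ s in (0:ℝ)..h, L (y₁ s) (y₁' s)) + bolzaValue L φ (t - h) (y₁ h) := by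
  conv_rhs => rw [bolzaValue]
  simp only [ENNReal.add_iInf]
  refine le_iInf fun y₂ => le_iInf fun y₂' => le_iInf fun hi => le_iInf fun heq =>
    le_iInf fun hL => ?_
  have h₂ : IsBolzaArc L (t - h) (y₁ h) y₂ y₂' := ⟨hi, heq, hL⟩
  have hend : concatAt h y₁ y₂ t = y₂ (t - h) := by
    rcases hht.lt_or_eq with hlt | rfl
    · exact concatAt_of_lt y₁ y₂ hlt
    · rw [concatAt_of_le y₁ y₂ le_rfl, sub_self, h₂.apply_zero (sub_self h).ge]
  refine (bolzaValue_le_cost (h₁.concat h0 hht h₂)).trans_eq ?_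
  rw [concatAt_comp₂ L, integral_concatAt h0 hht h₁.2.2 hL, hend,
    ENNReal.ofReal_add (intervalIntegral.integral_nonneg h0 fun s _ => hL0 _ _)
      (intervalIntegral.integral_nonneg (sub_nonneg.2 hht) fun s _ => hL0 _ _), add_assoc]

theorem bolzaValue_ne_top (hLcont : Continuous
      (fun p : EuclideanSpace ℝ (Fin n) × EuclideanSpace ℝ (Fin n) => L p.1 p.2))
    (hφ : ∃ x, φ x ≠ ⊤) {t : ℝ} (ht : 0 < t) (x : EuclideanSpace ℝ (Fin n)) :
    bolzaValue L φ t x ≠ ⊤ := by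
  obtain ⟨x₀, hx₀⟩ := hφ
  have hend : x + t • t⁻¹ • (x₀ - x) = x₀ := by
    rw [smul_smul, mul_inv_cancel₀ ht.ne', one_smul, add_sub_cancel]
  refine ne_top_of_le_ne_top ?_
    (bolzaValue_le_cost (φ := φ) (isBolzaArc_segment hLcont t x (t⁻¹ • (x₀ - x))))
  rw [hend]
  exact ENNReal.add_ne_top.2 ⟨ENNReal.ofReal_ne_top, hx₀⟩

theorem neg_integral_le_bolzaValue_sub (hL0 : ∀ x u, 0 ≤ L x u) (hLcont : Continuous
      (fun p : EuclideanSpace ℝ (Fin n) × EuclideanSpace ℝ (Fin n) => L p.1 p.2))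
    (hφ : ∃ x, φ x ≠ ⊤) {h t : ℝ} (h0 : 0 < h) (hht : h < t) (x u : EuclideanSpace ℝ (Fin n)) :
    ((-∫ s in (0:ℝ)..h, L (x + s • u) u : ℝ) : EReal) ≤
      (bolzaValue L φ (t - h) (x + h • u) : EReal) - bolzaValue L φ t x := by
  have ha := bolzaValue_ne_top (φ := φ) hLcont hφ (h0.trans hht) x
  have hb := bolzaValue_ne_top (φ := φ) hLcont hφ (sub_pos.2 hht) (x + h • u)
  have hdpp : bolzaValue L φ t x ≤ ENNReal.ofReal (∫ s in (0:ℝ)..h, L (x + s • u) u) +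
      bolzaValue L φ (t - h) (x + h • u) :=
    bolzaValue_le_cost_add_bolzaValue hL0 h0.le hht.le (isBolzaArc_segment hLcont h x u)
  have hreal := ENNReal.toReal_mono (ENNReal.add_ne_top.2 ⟨ENNReal.ofReal_ne_top, hb⟩) hdpp
  rw [ENNReal.toReal_add ENNReal.ofReal_ne_top hb,
    ENNReal.toReal_ofReal (intervalIntegral.integral_nonneg h0.le fun s _ => hL0 _ _)] at hreal
  rw [← EReal.coe_ennreal_toReal ha, ← EReal.coe_ennreal_toReal hb, ← EReal.coe_sub,
    EReal.coe_le_coe_iff]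
  linarith

theorem eventually_neg_integral_le_bolzaValue_sub (hL0 : ∀ x u, 0 ≤ L x u) (hLcont : Continuous
      (fun p : EuclideanSpace ℝ (Fin n) × EuclideanSpace ℝ (Fin n) => L p.1 p.2))
    (hφ : ∃ x, φ x ≠ ⊤) {t : ℝ} (ht : 0 < t) (x u : EuclideanSpace ℝ (Fin n)) :
    ∀ᶠ h in 𝓝[>] 0, ((-∫ s in (0:ℝ)..h, L (x + s • u) u : ℝ) : EReal) ≤
      (fun q : ℝ × EuclideanSpace ℝ (Fin n) => ((bolzaValue L φ q.1 q.2 : ℝ≥0∞) : EReal))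
        ((t, x) + h • (-1, u)) - bolzaValue L φ t x := by
  filter_upwards [Ioo_mem_nhdsGT ht] with h hh
  simpa [sub_eq_add_neg] using neg_integral_le_bolzaValue_sub (φ := φ) hL0 hLcont hφ hh.1 hh.2 x u

theorem tendsto_inv_mul_neg_integral (hLcont : Continuous
      (fun p : EuclideanSpace ℝ (Fin n) × EuclideanSpace ℝ (Fin n) => L p.1 p.2))
    (x u : EuclideanSpace ℝ (Fin n)) :
    Tendsto (fun h : ℝ => h⁻¹ * -∫ s in (0:ℝ)..h, L (x + s • u) u) (𝓝[>] 0) (𝓝 (-L x u)) := by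
  simpa using (tendsto_inv_mul_integral_nhdsGT
    (hLcont.comp (by fun_prop : Continuous fun s : ℝ => (x + s • u, u)))).neg

theorem hamiltonian_le {x p : EuclideanSpace ℝ (Fin n)} {c : ℝ}
    (h : ∀ u, ⟪p, u⟫ - L x u ≤ c) : hamiltonian L x p ≤ c :=
  csSup_le ⟨_, 0, rfl⟩ <| by
    rintro r ⟨u, rfl⟩
    exact h u

end Bolza

theorem stmt_19_general {n : ℕ}
    (L : EuclideanSpace ℝ (Fin n) → EuclideanSpace ℝ (Fin n) → ℝ)
    (hL0 : ∀ x u, 0 ≤ L x u)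
    (hLcont : Continuous
      (fun p : EuclideanSpace ℝ (Fin n) × EuclideanSpace ℝ (Fin n) => L p.1 p.2))
    (φ : EuclideanSpace ℝ (Fin n) → ℝ≥0∞)
    (hφ : ∃ x, φ x ≠ ⊤) :
    ∀ (t : ℝ) (x : EuclideanSpace ℝ (Fin n)), 0 < t →
      (∀ u : EuclideanSpace ℝ (Fin n),
        ((-(L x u) : ℝ) : EReal) ≤ upperContingentDeriv
          (fun q : ℝ × EuclideanSpace ℝ (Fin n) =>
            ((bolzaValue L φ q.1 q.2 : ℝ≥0∞) : EReal)) (t, x) (-1, u)) ∧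
      ∀ pt : ℝ, ∀ px : EuclideanSpace ℝ (Fin n),
        (pt, px) ∈ superdifferentialP
          (fun q : ℝ × EuclideanSpace ℝ (Fin n) =>
            ((bolzaValue L φ q.1 q.2 : ℝ≥0∞) : EReal)) (t, x) →
        pt + hamiltonian L x (-px) ≤ 0 := by
  intro t x ht
  have hG := tendsto_inv_mul_neg_integral hLcont x
  have hle := eventually_neg_integral_le_bolzaValue_sub (φ := φ) hL0 hLcont hφ ht x
  refine ⟨fun u => le_upperContingentDeriv_of_tendsto (hG u) (hle u), fun pt px hq => ?_⟩
  suffices hH : hamiltonian L x (-px) ≤ -pt by linarith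
  refine hamiltonian_le fun u => ?_
  have := le_of_mem_superdifferentialP hq (by simp : ((-1 : ℝ), u) ≠ 0) (hG u) (hle u)
  simp only [inner_neg_left] at this ⊢
  linarith

theorem stmt_19 {n : ℕ}
    (L : EuclideanSpace ℝ (Fin n) → EuclideanSpace ℝ (Fin n) → ℝ)
    (hL0 : ∀ x u, 0 ≤ L x u)
    (hLcont : Continuous
      (fun p : EuclideanSpace ℝ (Fin n) × EuclideanSpace ℝ (Fin n) => L p.1 p.2))
    (hLconv : ∀ x, ConvexOn ℝ Set.univ (L x))
    (Θ : EuclideanSpace ℝ (Fin n) → ℝ) (hΘ0 : ∀ u, 0 ≤ Θ u)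
    (hΘconv : ConvexOn ℝ Set.univ Θ) (hΘsuper : Superlinear Θ)
    (hcoerc : ∀ x u, Θ u ≤ L x u)
    (φ : EuclideanSpace ℝ (Fin n) → ℝ≥0∞)
    (hφlsc : LowerSemicontinuous φ) (hφ : ∃ x, φ x ≠ ⊤) :
    ∀ (t : ℝ) (x : EuclideanSpace ℝ (Fin n)), 0 < t →
      (∀ u : EuclideanSpace ℝ (Fin n),
        ((-(L x u) : ℝ) : EReal) ≤ upperContingentDeriv
          (fun q : ℝ × EuclideanSpace ℝ (Fin n) =>
            ((bolzaValue L φ q.1 q.2 : ℝ≥0∞) : EReal)) (t, x) (-1, u)) ∧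
      ∀ pt : ℝ, ∀ px : EuclideanSpace ℝ (Fin n),
        (pt, px) ∈ superdifferentialP
          (fun q : ℝ × EuclideanSpace ℝ (Fin n) =>
            ((bolzaValue L φ q.1 q.2 : ℝ≥0∞) : EReal)) (t, x) →
        pt + hamiltonian L x (-px) ≤ 0 :=
  stmt_19_general L hL0 hLcont φ hφ
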